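/- arXiv:2101.11518 — 6 statements merged into one kernel-verified Lean document; each statement's English description precedes it below -/
import Mathlib

section
/- Let A be a 2-dimensional F-vector space with basis {x, y} and anticommutative multiplication determined by [x, y] = y (the affine Lie algebra aff(F)). Then: (i) every linear map σ : A → A is a twisting map, i.e. satisfies the Hom-Jacobi identity (indeed the Hom-Jacobian is an alternating trilinear map, hence vanishes on a 2-dimensional space); and (ii) for every linear map σ with σ(y) ∉ F·y, the triple (A,[·,·],σ) is a simple Hom-Lie algebra, i.e. the only subspaces I of A with [I,A] ⊆ I and σ(I) ⊆ I are 0 and A. -/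
/-!
On a 2-dimensional space with basis `e₀, e₁` every alternating bracket is
`[u, v] = det(u, v) • [e₀, e₁]`. Hence the Hom-Jacobian of `σ` at `x, y, z` equals
`[σ (det(y, z) • x + det(z, x) • y + det(x, y) • z), [e₀, e₁]]`, and the vector inside `σ`
vanishes in dimension two (Cramer's rule).

For simplicity, with `[e₀, e₁] = e₁` we get `[v, e₀] = -v₁ • e₁` and `[v, e₁] = v₀ • e₁`, so
every nonzero ideal contains `e₁`. A Hom-ideal then also contains `σ e₁ ∉ F e₁`, and is
everything by dimension count.
-/

namespace Module.Basis

variable {F A : Type*} [Field F] [AddCommGroup A] [Module F A] (B : Basis (Fin 2) F A)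

theorem det_fin_two_apply (u v : A) :
    B.det ![u, v] = B.repr u 0 * B.repr v 1 - B.repr u 1 * B.repr v 0 := by
  rw [det_apply, Matrix.det_fin_two]
  simp only [toMatrix_apply, Matrix.cons_val_zero, Matrix.cons_val_one]
  ring

theorem det_smul_add_det_smul_add_det_smul (x y z : A) :
    B.det ![y, z] • x + B.det ![z, x] • y + B.det ![x, y] • z = 0 := by
  refine B.ext_elem fun i => ?_
  simp only [map_add, map_smul, Finsupp.add_apply, Finsupp.smul_apply, smul_eq_mul,
    det_fin_two_apply, map_zero, Finsupp.coe_zero, Pi.zero_apply]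
  fin_cases i <;> simp only [Fin.zero_eta, Fin.mk_one] <;> ring

theorem apply_eq_det_smul {M : Type*} [AddCommGroup M] [Module F M]
    {b : A →ₗ[F] A →ₗ[F] M} (hb : b.IsAlt) (u v : A) :
    b u v = B.det ![u, v] • b (B 0) (B 1) := by
  conv_lhs => rw [← B.sum_repr u, ← B.sum_repr v]
  simp only [Fin.sum_univ_two, map_add, map_smul, LinearMap.add_apply, LinearMap.smul_apply,
    hb.self_eq_zero, ← hb.neg (B 0) (B 1), det_fin_two_apply]
  module

end Module.Basis

section

variable {F A : Type*} [Field F] [AddCommGroup A] [Module F A]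

theorem LinearMap.IsAlt.homJacobi_eq_zero (B : Module.Basis (Fin 2) F A)
    {b : A →ₗ[F] A →ₗ[F] A} (hb : b.IsAlt) (σ : A →ₗ[F] A) (x y z : A) :
    b (σ x) (b y z) + b (σ y) (b z x) + b (σ z) (b x y) = 0 := by
  rw [B.apply_eq_det_smul hb y z, B.apply_eq_det_smul hb z x, B.apply_eq_det_smul hb x y]
  calc _ = b (σ (B.det ![y, z] • x + B.det ![z, x] • y + B.det ![x, y] • z)) (b (B 0) (B 1)) := by
        simp only [map_add, map_smul, LinearMap.add_apply, LinearMap.smul_apply]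
    _ = 0 := by
        rw [B.det_smul_add_det_smul_add_det_smul, map_zero, map_zero, LinearMap.zero_apply]

theorem Submodule.eq_top_of_finrank_eq_two [FiniteDimensional F A] (hA : Module.finrank F A = 2)
    {I : Submodule F A} {u w : A} (hu : u ∈ I) (hu0 : u ≠ 0) (hw : w ∈ I)
    (hwu : w ∉ Submodule.span F {u}) : I = ⊤ := by
  have hlt : F ∙ u < I :=
    SetLike.lt_iff_le_and_exists.mpr ⟨(Submodule.span_singleton_le_iff_mem u I).mpr hu, w, hw, hwu⟩
  have := Submodule.finrank_lt_finrank_of_lt hlt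
  rw [finrank_span_singleton hu0] at this
  exact Submodule.eq_top_of_finrank_eq (by have := Submodule.finrank_le I; omega)

theorem Module.Basis.one_mem_of_ne_zero_mem (B : Module.Basis (Fin 2) F A)
    {b : A →ₗ[F] A →ₗ[F] A} (hb : b.IsAlt) (haff : b (B 0) (B 1) = B 1) {I : Submodule F A}
    (hI : ∀ v ∈ I, ∀ w : A, b v w ∈ I) {v : A} (hv : v ∈ I) (hv0 : v ≠ 0) : B 1 ∈ I := by
  have h0 : b v (B 0) = -B.repr v 1 • B 1 := by
    rw [B.apply_eq_det_smul hb, haff, B.det_fin_two_apply]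
    simp
  have h1 : b v (B 1) = B.repr v 0 • B 1 := by
    rw [B.apply_eq_det_smul hb, haff, B.det_fin_two_apply]
    simp
  obtain ⟨i, hi⟩ : ∃ i, B.repr v i ≠ 0 := by
    by_contra! h
    exact hv0 (B.repr.injective (Finsupp.ext h |>.trans (map_zero _).symm))
  fin_cases i
  · exact (I.smul_mem_iff hi).mp (h1 ▸ hI v hv (B 1))
  · exact (I.smul_mem_iff (neg_ne_zero.mpr hi)).mp (h0 ▸ hI v hv (B 0))

end

/-- Let `A` be 2-dimensional with basis `{x, y}` and anticommutative
multiplication determined by `[x, y] = y` (the affine Lie algebra `aff(F)`).  Then: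
(i) every linear map `σ : A → A` satisfies the Hom-Jacobi identity, and
(ii) for every linear `σ` with `σ(y) ∉ F·y`, the triple `(A,[·,·],σ)` is a simple
Hom-Lie algebra: its only Hom-ideals are `0` and `A`. -/
theorem stmt2 (F : Type*) [Field F] (A : Type*) [AddCommGroup A] [Module F A]
    (B : Module.Basis (Fin 2) F A)
    (b : A →ₗ[F] A →ₗ[F] A)
    (halt : ∀ x : A, b x x = 0)
    (haff : b (B 0) (B 1) = B 1) :
    (∀ σ : A →ₗ[F] A, ∀ x y z : A,
        b (σ x) (b y z) + b (σ y) (b z x) + b (σ z) (b x y) = 0) ∧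
    (∀ σ : A →ₗ[F] A, σ (B 1) ∉ Submodule.span F {B 1} →
      ∀ I : Submodule F A, (∀ v ∈ I, ∀ w : A, b v w ∈ I) → (∀ v ∈ I, σ v ∈ I) →
        I = ⊥ ∨ I = ⊤) := by
  refine ⟨LinearMap.IsAlt.homJacobi_eq_zero B halt, fun σ hσ I hbI hσI => ?_⟩
  refine or_iff_not_imp_left.mpr fun hI => ?_
  obtain ⟨v, hv, hv0⟩ := Submodule.exists_mem_ne_zero_of_ne_bot hI
  have h1 : B 1 ∈ I := B.one_mem_of_ne_zero_mem halt haff hbI hv hv0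
  have := B.finiteDimensional_of_finite
  exact Submodule.eq_top_of_finrank_eq_two (Module.finrank_eq_card_basis B)
    h1 (B.ne_zero 1) (hσI _ h1) hσ
end

section
/- Let aff(F) be the 2-dimensional algebra over a field F with basis B = {x,y} and [x,y] = y. Let σ, η be linear endomorphisms with matrices (σ_ij), (η_ij) in the basis B (so σ(x) = σ11·x + σ21·y and σ(y) = σ12·x + σ22·y, similarly for η), and assume σ12 ≠ 0 and η12 ≠ 0 (so that the twisted triples are simple Hom-Lie algebras). Then there exists a bijective linear map φ : aff(F) → aff(F) with φ([u,v]) = [φ(u),φ(v)] for all u,v and φ∘σ = η∘φ (equivalently, the simple Hom-Lie algebras (aff(F), σ∘[·,·], σ) and (aff(F), η∘[·,·], η) are isomorphic) if and only if σ11 + σ22 = η11 + η22 and σ12·σ21 − η12·η21 = (σ11 − η11)·(σ22 − η11). In particular, there are at least as many pairwise nonisomorphic simple Hom-Lie structures on aff(F) as elements of F. -/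
/-!
Conjugate endomorphisms have equal trace and determinant, and given equal traces the second
condition is `det σ = det η`. Conversely, every linear map `x ↦ x + μ y`, `y ↦ κ y` is an
endomorphism of the bracket of `aff(F)`, and `μ = (σ₁₁ - η₁₁) / η₁₂`, `κ = σ₁₂ / η₁₂` make it
intertwine `σ` with `η`; it is invertible since `κ ≠ 0`. The simple twists by
`x ↦ c x`, `y ↦ x` have trace `c`, so they are pairwise nonisomorphic.
-/

open Matrix

section Conjugation

variable {R M : Type*} [CommRing R] [AddCommGroup M] [Module R M]

theorem LinearMap.eq_conj_of_intertwines (φ : M ≃ₗ[R] M) {σ η : M →ₗ[R] M}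
    (h : ∀ u, φ (σ u) = η (φ u)) : η = φ.conj σ := by
  ext u
  simp [LinearEquiv.conj_apply, h]

theorem LinearMap.trace_eq_of_intertwines (φ : M ≃ₗ[R] M) {σ η : M →ₗ[R] M}
    (h : ∀ u, φ (σ u) = η (φ u)) : trace R M η = trace R M σ := by
  rw [eq_conj_of_intertwines φ h, trace_conj']

theorem LinearMap.det_eq_of_intertwines (φ : M ≃ₗ[R] M) {σ η : M →ₗ[R] M}
    (h : ∀ u, φ (σ u) = η (φ u)) : LinearMap.det η = LinearMap.det σ := by
  rw [eq_conj_of_intertwines φ h, LinearEquiv.conj_apply, comp_assoc, det_conj]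

end Conjugation

section FinTwo

variable {R A : Type*} [CommRing R] [AddCommGroup A] [Module R A] (B : Module.Basis (Fin 2) R A)
  {f : A →ₗ[R] A} {a₁₁ a₁₂ a₂₁ a₂₂ : R}

theorem LinearMap.toMatrix_eq_fin_two (h₀ : f (B 0) = a₁₁ • B 0 + a₂₁ • B 1)
    (h₁ : f (B 1) = a₁₂ • B 0 + a₂₂ • B 1) : toMatrix B B f = !![a₁₁, a₁₂; a₂₁, a₂₂] := by
  ext i j
  fin_cases i <;> fin_cases j <;> simp [toMatrix_apply, h₀, h₁]

theorem LinearMap.eq_toLin_fin_two (h₀ : f (B 0) = a₁₁ • B 0 + a₂₁ • B 1)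
    (h₁ : f (B 1) = a₁₂ • B 0 + a₂₂ • B 1) : f = toLin B B !![a₁₁, a₁₂; a₂₁, a₂₂] := by
  rw [← toMatrix_eq_fin_two B h₀ h₁, toLin_toMatrix]

theorem LinearMap.trace_eq_fin_two (h₀ : f (B 0) = a₁₁ • B 0 + a₂₁ • B 1)
    (h₁ : f (B 1) = a₁₂ • B 0 + a₂₂ • B 1) : trace R A f = a₁₁ + a₂₂ := by
  rw [trace_eq_matrix_trace R B, toMatrix_eq_fin_two B h₀ h₁, trace_fin_two_of]

theorem LinearMap.det_eq_fin_two (h₀ : f (B 0) = a₁₁ • B 0 + a₂₁ • B 1)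
    (h₁ : f (B 1) = a₁₂ • B 0 + a₂₂ • B 1) : LinearMap.det f = a₁₁ * a₂₂ - a₁₂ * a₂₁ := by
  rw [← det_toMatrix B, toMatrix_eq_fin_two B h₀ h₁, det_fin_two_of]

end FinTwo

theorem map_bracket_of_apply_basis {R A : Type*} [CommRing R] [AddCommGroup A] [Module R A]
    (B : Module.Basis (Fin 2) R A) {b : A →ₗ[R] A →ₗ[R] A} (hb : b.IsAlt)
    (haff : b (B 0) (B 1) = B 1) {φ : A →ₗ[R] A} {μ κ : R}
    (h₀ : φ (B 0) = B 0 + μ • B 1) (h₁ : φ (B 1) = κ • B 1) (u v : A) :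
    φ (b u v) = b (φ u) (φ v) := by
  have hyx : b (B 1) (B 0) = -B 1 := by rw [← hb.neg, haff]
  suffices b.compr₂ φ = b.compl₁₂ φ φ from congr($this u v)
  refine LinearMap.ext_basis B B fun i j => ?_
  fin_cases i <;> fin_cases j <;> simp [h₀, h₁, hb.self_eq_zero, haff, hyx]

theorem Matrix.intertwines_of_trace_det_fin_two {F : Type*} [Field F]
    {σ₁₁ σ₁₂ σ₂₁ σ₂₂ η₁₁ η₁₂ η₂₁ η₂₂ μ κ : F} (hη₁₂ : η₁₂ ≠ 0)
    (hμ : μ * η₁₂ = σ₁₁ - η₁₁) (hκ : κ * η₁₂ = σ₁₂) (htr : σ₁₁ + σ₂₂ = η₁₁ + η₂₂)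
    (hdet : σ₁₂ * σ₂₁ - η₁₂ * η₂₁ = (σ₁₁ - η₁₁) * (σ₂₂ - η₁₁)) :
    !![1, 0; μ, κ] * !![σ₁₁, σ₁₂; σ₂₁, σ₂₂] = !![η₁₁, η₁₂; η₂₁, η₂₂] * !![1, 0; μ, κ] := by
  have h₁₀ : μ * σ₁₁ + κ * σ₂₁ = η₂₁ + η₂₂ * μ := by
    refine mul_right_cancel₀ hη₁₂ ?_
    linear_combination σ₁₁ * hμ + σ₂₁ * hκ - η₂₂ * hμ + hdet + (σ₁₁ - η₁₁) * htr
  ext i j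
  fin_cases i <;> fin_cases j <;> simp
  · linear_combination -hμ
  · linear_combination -hκ
  · exact h₁₀
  · linear_combination κ * hμ + κ * htr - μ * hκ

section YauTwist

variable {F A : Type*} [Field F] [AddCommGroup A] [Module F A] (B : Module.Basis (Fin 2) F A)
  {σ η : A →ₗ[F] A} {σ₁₁ σ₁₂ σ₂₁ σ₂₂ η₁₁ η₁₂ η₂₁ η₂₂ : F}
  (hσ₀ : σ (B 0) = σ₁₁ • B 0 + σ₂₁ • B 1) (hσ₁ : σ (B 1) = σ₁₂ • B 0 + σ₂₂ • B 1)
  (hη₀ : η (B 0) = η₁₁ • B 0 + η₂₁ • B 1) (hη₁ : η (B 1) = η₁₂ • B 0 + η₂₂ • B 1)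
include hσ₀ hσ₁ hη₀ hη₁

theorem trace_det_conditions_of_intertwines (φ : A ≃ₗ[F] A) (hφ : ∀ u, φ (σ u) = η (φ u)) :
    σ₁₁ + σ₂₂ = η₁₁ + η₂₂ ∧ σ₁₂ * σ₂₁ - η₁₂ * η₂₁ = (σ₁₁ - η₁₁) * (σ₂₂ - η₁₁) := by
  have htr := LinearMap.trace_eq_of_intertwines φ hφ
  have hdet := LinearMap.det_eq_of_intertwines φ hφ
  rw [LinearMap.trace_eq_fin_two B hσ₀ hσ₁, LinearMap.trace_eq_fin_two B hη₀ hη₁] at htr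
  rw [LinearMap.det_eq_fin_two B hσ₀ hσ₁, LinearMap.det_eq_fin_two B hη₀ hη₁] at hdet
  exact ⟨htr.symm, by linear_combination η₁₁ * htr.symm + hdet⟩

theorem exists_homLie_iso_of_trace_det_conditions {b : A →ₗ[F] A →ₗ[F] A} (hb : b.IsAlt)
    (haff : b (B 0) (B 1) = B 1) (hσ₁₂ : σ₁₂ ≠ 0) (hη₁₂ : η₁₂ ≠ 0)
    (htr : σ₁₁ + σ₂₂ = η₁₁ + η₂₂) (hdet : σ₁₂ * σ₂₁ - η₁₂ * η₂₁ = (σ₁₁ - η₁₁) * (σ₂₂ - η₁₁)) :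
    ∃ φ : A ≃ₗ[F] A, (∀ u v, φ (σ (b u v)) = η (b (φ u) (φ v))) ∧ ∀ u, φ (σ u) = η (φ u) := by
  set μ := (σ₁₁ - η₁₁) / η₁₂
  set κ := σ₁₂ / η₁₂
  set M : Matrix (Fin 2) (Fin 2) F := !![1, 0; μ, κ]
  have hM : IsUnit M.det := by simp [M, κ, hσ₁₂, hη₁₂]
  have hMσ : toLin B B M ∘ₗ σ = η ∘ₗ toLin B B M := by
    rw [LinearMap.eq_toLin_fin_two B hσ₀ hσ₁, LinearMap.eq_toLin_fin_two B hη₀ hη₁,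
      ← toLin_mul, ← toLin_mul, intertwines_of_trace_det_fin_two hη₁₂ (div_mul_cancel₀ _ hη₁₂)
        (div_mul_cancel₀ _ hη₁₂) htr hdet]
  have hMb := map_bracket_of_apply_basis B hb haff (φ := toLin B B M) (μ := μ) (κ := κ)
    (by simp [M, toLin_self]) (by simp [M, toLin_self])
  refine ⟨M.toLinearEquiv B hM, fun u v => ?_, fun u => congr($hMσ u)⟩
  simp only [toLinearEquiv_apply, ← hMb]
  exact congr($hMσ (b u v))

end YauTwist

/-- On `aff(F)` (basis `{x,y} = {B 0, B 1}`, `[x,y] = y`), let `σ, η` be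
linear maps with matrix entries `σᵢⱼ`, `ηᵢⱼ` in this basis and `σ12 ≠ 0`, `η12 ≠ 0`.
Then the simple Hom-Lie algebras `(aff(F), σ∘[·,·], σ)` and `(aff(F), η∘[·,·], η)` are
isomorphic iff `σ11 + σ22 = η11 + η22` and
`σ12·σ21 − η12·η21 = (σ11 − η11)·(σ22 − η11)`.  In particular, there are at least as
many pairwise nonisomorphic simple Hom-Lie structures on `aff(F)` as elements of `F`. -/
theorem stmt4 (F : Type*) [Field F] (A : Type*) [AddCommGroup A] [Module F A]
    (B : Module.Basis (Fin 2) F A)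
    (b : A →ₗ[F] A →ₗ[F] A)
    (halt : ∀ x : A, b x x = 0)
    (haff : b (B 0) (B 1) = B 1)
    (σ η : A →ₗ[F] A)
    (σ11 σ12 σ21 σ22 η11 η12 η21 η22 : F)
    (hσx : σ (B 0) = σ11 • B 0 + σ21 • B 1) (hσy : σ (B 1) = σ12 • B 0 + σ22 • B 1)
    (hηx : η (B 0) = η11 • B 0 + η21 • B 1) (hηy : η (B 1) = η12 • B 0 + η22 • B 1)
    (hσ12 : σ12 ≠ 0) (hη12 : η12 ≠ 0) :
    ((∃ φ : A ≃ₗ[F] A,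
        (∀ u v : A, φ (σ (b u v)) = η (b (φ u) (φ v))) ∧
        (∀ u : A, φ (σ u) = η (φ u))) ↔
      (σ11 + σ22 = η11 + η22 ∧
        σ12 * σ21 - η12 * η21 = (σ11 - η11) * (σ22 - η11))) ∧
    (∃ T : F → (A →ₗ[F] A),
      (∀ c : F, T c (B 1) ∉ Submodule.span F {B 1}) ∧
      (∀ c c' : F,
        (∃ φ : A ≃ₗ[F] A,
          (∀ u v : A, φ (T c (b u v)) = T c' (b (φ u) (φ v))) ∧
          (∀ u : A, φ (T c u) = T c' (φ u))) → c = c')) := by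
  refine ⟨⟨fun ⟨φ, _, hφ⟩ => trace_det_conditions_of_intertwines B hσx hσy hηx hηy φ hφ,
    fun ⟨htr, hdet⟩ => exists_homLie_iso_of_trace_det_conditions B hσx hσy hηx hηy halt haff
      hσ12 hη12 htr hdet⟩, fun c => toLin B B !![c, 1; 0, 0], fun c => ?_,
    fun c c' ⟨φ, _, hφ⟩ => ?_⟩
  · have h := B.linearIndependent.notMem_span_image (s := {1}) (x := 0) (by simp)
    simpa [toLin_self] using h
  · simpa [LinearMap.trace_eq_matrix_trace F B] using (LinearMap.trace_eq_of_intertwines φ hφ).symm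
end

section
/- Let g be a finite-dimensional simple Lie algebra over a field F and let σ and η be Lie algebra automorphisms of g. Then the regular Hom-Lie algebras (g, σ∘[·,·], σ) and (g, η∘[·,·], η) obtained by Yau twisting are isomorphic as Hom-Lie algebras if and only if σ and η are conjugate in Aut(g), i.e. there exists an automorphism φ of g with η = φ∘σ∘φ^{-1}. -/
/-- For a finite-dimensional simple Lie algebra `g` and automorphisms
`σ, η`, the Yau twists `(g, σ∘[·,·], σ)` and `(g, η∘[·,·], η)` are isomorphic as
Hom-Lie algebras iff `σ` and `η` are conjugate in `Aut(g)`. -/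
theorem stmt12 (F : Type*) [Field F]
    (L : Type*) [LieRing L] [LieAlgebra F L] [Module.Finite F L]
    [LieAlgebra.IsSimple F L]
    (σ η : L ≃ₗ⁅F⁆ L) :
    (∃ φ : L ≃ₗ[F] L,
        (∀ x y : L, φ (σ ⁅x, y⁆) = η ⁅φ x, φ y⁆) ∧
        (∀ x : L, φ (σ x) = η (φ x))) ↔
      (∃ χ : L ≃ₗ⁅F⁆ L, ∀ x : L, η x = χ (σ (χ.symm x))) := by
  constructor
  · rintro ⟨φ, hbr, hcomm⟩
    have hlie : ∀ x y : L, φ ⁅x, y⁆ = ⁅φ x, φ y⁆ := by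
      intro x y
      have h1 : η (φ ⁅x, y⁆) = η ⁅φ x, φ y⁆ := by
        rw [← hcomm, hbr]
      exact η.injective h1
    refine ⟨{ φ with map_lie' := fun {x y} => hlie x y }, fun x => ?_⟩
    have hx := hcomm (φ.symm x)
    simp only [LinearEquiv.apply_symm_apply] at hx
    exact hx.symm
  · rintro ⟨χ, hχ⟩
    refine ⟨χ.toLinearEquiv, fun x y => ?_, fun x => ?_⟩
    · show χ (σ ⁅x, y⁆) = η ⁅χ x, χ y⁆
      rw [hχ ⁅χ x, χ y⁆, ← LieEquiv.map_lie χ x y]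
      simp
    · show χ (σ x) = η (χ x)
      rw [hχ (χ x)]
      simp
end

section
/- Let g be a simple Lie algebra (of arbitrary dimension) over an arbitrary field and let x ∈ g be nonzero. Then the rank of the adjoint map ad x : g → g, y ↦ [x,y], is at least 2; equivalently, there exist y, z ∈ g such that [x,y] and [x,z] are linearly independent. -/
/-!
Suppose `ad x` maps `L` into the line through `⁅x, y⁆ ≠ 0` and put `φ = ad y`. By the Jacobi
identity the cyclic subspace `F[φ] (φ x)` is an ideal, so by simplicity it is all of `L`. Writing
`x = q(φ) φ x` and `y = p(φ) φ x`, commutativity of polynomials in `φ` gives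
`y = p(φ) φ q(φ) φ x = q(φ) φ y = 0`, because `φ y = ⁅y, y⁆ = 0`; hence `⁅x, y⁆ = 0`.
-/
open Polynomial LieAlgebra

namespace Module.End

variable {R M : Type*} [CommRing R] [AddCommGroup M] [Module R M]

noncomputable def cyclicSubmodule (φ : Module.End R M) (v : M) : Submodule R M :=
  LinearMap.range (LinearMap.applyₗ v ∘ₗ (aeval φ).toLinearMap)

variable {φ : Module.End R M} {v w : M}

theorem mem_cyclicSubmodule : w ∈ φ.cyclicSubmodule v ↔ ∃ p : R[X], aeval φ p v = w := by
  simp [cyclicSubmodule]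

theorem self_mem_cyclicSubmodule : v ∈ φ.cyclicSubmodule v :=
  mem_cyclicSubmodule.2 ⟨1, by simp⟩

theorem apply_mem_cyclicSubmodule (hw : w ∈ φ.cyclicSubmodule v) :
    φ w ∈ φ.cyclicSubmodule v := by
  obtain ⟨p, rfl⟩ := mem_cyclicSubmodule.1 hw
  exact mem_cyclicSubmodule.2 ⟨X * p, by simp⟩

theorem eq_zero_of_mem_cyclicSubmodule_apply {x y : M} (hx : x ∈ φ.cyclicSubmodule (φ x))
    (hy : y ∈ φ.cyclicSubmodule (φ x)) (hφy : φ y = 0) : y = 0 := by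
  obtain ⟨p, rfl⟩ := mem_cyclicSubmodule.1 hy
  obtain ⟨q, hq⟩ := mem_cyclicSubmodule.1 hx
  calc aeval φ p (φ x) = aeval φ (p * X * q) (φ x) := by
        conv_lhs => rw [← hq]
        simp [mul_apply]
    _ = aeval φ q (φ (aeval φ p (φ x))) := by
        rw [show p * X * q = q * X * p by ring]
        simp [mul_apply]
    _ = 0 := by rw [hφy, map_zero]

end Module.End

namespace LieAlgebra

variable {R L : Type*} [CommRing R] [LieRing L] [LieAlgebra R L]

theorem IsSimple.exists_lie_ne_zero [IsSimple R L] {x : L} (hx : x ≠ 0) :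
    ∃ y : L, ⁅x, y⁆ ≠ 0 := by
  by_contra! h
  have hc : x ∈ center R L := fun y => by rw [← lie_skew, h y, neg_zero]
  simp_all [center_eq_bot]

theorem lie_lie_mem_of_forall_lie_mem {W : Submodule R L} {y u : L}
    (hW : ∀ w ∈ W, ⁅y, w⁆ ∈ W) (hu : ∀ a : L, ⁅a, u⁆ ∈ W) (a : L) :
    ⁅a, ⁅y, u⁆⁆ ∈ W := by
  rw [leibniz_lie]
  exact add_mem (hu _) (hW _ (hu a))

theorem lie_aeval_ad_mem {W : Submodule R L} {y u : L}
    (hW : ∀ w ∈ W, ⁅y, w⁆ ∈ W) (hu : ∀ a : L, ⁅a, u⁆ ∈ W) (p : R[X]) (a : L) :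
    ⁅a, aeval (ad R L y) p u⁆ ∈ W := by
  induction p using Polynomial.induction_on generalizing a with
  | C c => simpa using W.smul_mem c (hu a)
  | add p q hp hq => simpa using add_mem (hp a) (hq a)
  | monomial n c ih =>
    rw [show C c * X ^ (n + 1) = X * (C c * X ^ n) by ring, map_mul, aeval_X,
      Module.End.mul_apply, ad_apply]
    exact lie_lie_mem_of_forall_lie_mem hW ih a

theorem IsSimple.submodule_eq_top [IsSimple R L] {W : Submodule R L}
    (hW : ∀ a : L, ∀ w ∈ W, ⁅a, w⁆ ∈ W) (hW₀ : W ≠ ⊥) : W = ⊤ := by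
  let I : LieIdeal R L := { W with lie_mem := hW _ _ }
  rcases IsSimple.eq_bot_or_eq_top I with h | h
  · exact absurd (congrArg LieSubmodule.toSubmodule h) hW₀
  · exact congrArg LieSubmodule.toSubmodule h

theorem IsSimple.lie_eq_zero_of_forall_lie_mem_span [IsSimple R L] {x y : L}
    (h : ∀ a, ⁅x, a⁆ ∈ R ∙ ⁅x, y⁆) : ⁅x, y⁆ = 0 := by
  by_contra hne
  set φ := ad R L y
  set W := φ.cyclicSubmodule (φ x)
  have hφx : φ x = -⁅x, y⁆ := by rw [ad_apply, ← lie_skew]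
  have hx : ∀ a : L, ⁅a, x⁆ ∈ W := fun a => by
    have hspan : R ∙ ⁅x, y⁆ ≤ W := by
      rw [Submodule.span_singleton_le_iff_mem, ← neg_neg ⁅x, y⁆, ← hφx]
      exact W.neg_mem Module.End.self_mem_cyclicSubmodule
    rw [← lie_skew]
    exact W.neg_mem (hspan (h a))
  have hideal : ∀ a : L, ∀ w ∈ W, ⁅a, w⁆ ∈ W := by
    intro a w hw
    obtain ⟨p, rfl⟩ := Module.End.mem_cyclicSubmodule.1 hw
    have hp : aeval φ p (φ x) = aeval φ (p * X) x := by simp [Module.End.mul_apply]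
    rw [hp]
    exact lie_aeval_ad_mem (fun _ => Module.End.apply_mem_cyclicSubmodule) hx _ a
  have htop : W = ⊤ := IsSimple.submodule_eq_top hideal <| by
    rw [Submodule.ne_bot_iff]
    exact ⟨φ x, Module.End.self_mem_cyclicSubmodule, by rwa [hφx, neg_ne_zero]⟩
  have hmem (z : L) : z ∈ W := htop ▸ Submodule.mem_top
  have hy : y = 0 :=
    Module.End.eq_zero_of_mem_cyclicSubmodule_apply (hmem x) (hmem y) (lie_self y)
  exact hne (by rw [hy, lie_zero])

end LieAlgebra

/-- In a simple Lie algebra (of arbitrary dimension) over an arbitrary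
field, every nonzero `x` has `rk(ad x) ≥ 2`: there exist `y, z` with `[x,y]` and
`[x,z]` linearly independent. -/
theorem stmt13 (F : Type*) [Field F]
    (L : Type*) [LieRing L] [LieAlgebra F L] [LieAlgebra.IsSimple F L]
    (x : L) (hx : x ≠ 0) :
    ∃ y z : L, LinearIndependent F ![⁅x, y⁆, ⁅x, z⁆] := by
  obtain ⟨y, hy⟩ := IsSimple.exists_lie_ne_zero (R := F) hx
  by_contra! h
  refine hy (IsSimple.lie_eq_zero_of_forall_lie_mem_span (R := F) fun a => ?_)
  have hdep := h a y
  rw [linearIndependent_fin2] at hdep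
  push Not at hdep
  obtain ⟨c, hc⟩ := hdep hy
  exact Submodule.mem_span_singleton.2 ⟨c, hc⟩
end

section
/- Let s be a simple Lie algebra over an arbitrary field F, let x ∈ s be nonzero, and let f : s → s be a linear map with f(x) = x and image equal to the line F·x. Let A = F·d ⊕ s be the anticommutative algebra extending the bracket of s by [d,d] = 0 and [d,u] = f(u) = −[u,d] for all u ∈ s. Then the only ideals of A (subspaces I with [I,A] ⊆ I) are 0, s, and A; in particular s is the unique proper nontrivial ideal of A, it is a simple ideal of codimension 1, and A is semisimple (has no nonzero solvable ideal). -/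
/-!
An ideal `I` of `A = F·d ⊕ s` meets `s` in a Lie ideal of `s`, hence in `0` or `s`.
If it contains `s`, it is `s` or `A` since `s` has codimension one. If it meets `s` trivially but
contains some `a·d + u` with `a ≠ 0`, then bracketing with `s` gives `ad u = -a f`, so `f` is a
multiple of a derivation. As `f x = x` and `f s ⊆ F·x`, the Leibniz rule then gives
`f [v, x] = [v, x]` for all `v`, so `F·x` is a one-dimensional ideal of `s`, which is impossible.
Finally, `[s, s] = s` keeps `s` inside every term of the derived series of an ideal containing
it, so `0` is the only solvable ideal.
-/

/-- The derived series of a subspace `I` of an anticommutative algebra with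
multiplication `br`. -/
def derSeries (F : Type*) [Field F] (V : Type*) [AddCommGroup V] [Module F V]
    (br : V → V → V) (I : Submodule F V) : ℕ → Submodule F V
  | 0 => I
  | k + 1 => Submodule.span F
      {z : V | ∃ u ∈ derSeries F V br I k, ∃ v ∈ derSeries F V br I k, br u v = z}

open Submodule

lemma derSeries_mono {F : Type*} [Field F] {V : Type*} [AddCommGroup V] [Module F V]
    (br : V → V → V) {I I' : Submodule F V} (h : I ≤ I') (k : ℕ) :
    derSeries F V br I k ≤ derSeries F V br I' k := by
  induction k with
  | zero => exact h
  | succ k ih =>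
    apply span_mono
    rintro z ⟨u, hu, v, hv, rfl⟩
    exact ⟨u, ih hu, v, ih hv, rfl⟩

lemma Submodule.eq_prod_bot_top_or_eq_top {F M : Type*} [Field F] [AddCommGroup M] [Module F M]
    {I : Submodule F (F × M)} (h : (⊥ : Submodule F F).prod (⊤ : Submodule F M) ≤ I) :
    I = (⊥ : Submodule F F).prod ⊤ ∨ I = ⊤ := by
  have hcoatom : IsCoatom ((⊥ : Submodule F F).prod (⊤ : Submodule F M)) := by
    rw [← map_inr, map_top, LinearMap.range_inr]
    exact LinearMap.isCoatom_ker_of_surjective LinearMap.fst_surjective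
  exact (hcoatom.le_iff.mp h).symm

namespace LieAlgebra.IsSimple

variable {F L : Type*} [Field F] [LieRing L] [LieAlgebra F L] [IsSimple F L]

variable (F L) in
lemma span_lie_eq_top : span F {z : L | ∃ u v : L, ⁅u, v⁆ = z} = ⊤ := by
  rw [← coe_derivedSeries_one_eq]
  rcases eq_bot_or_eq_top (derivedSeries F L 1) with h | h
  · refine absurd ⟨fun u v => ?_⟩ (non_abelian F (L := L))
    have huv : ⁅u, v⁆ ∈ (derivedSeries F L 1 : Submodule F L) := by
      rw [coe_derivedSeries_one_eq]
      exact subset_span ⟨u, v, rfl⟩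
    rw [h] at huv
    simpa using huv
  · rw [h]
    rfl

lemma exists_lie_notMem_span_singleton {x : L} (hx : x ≠ 0) :
    ∃ v : L, ⁅v, x⁆ ∉ span F {x} := by
  by_contra! hmem
  let K : LieIdeal F L :=
    { span F {x} with
      lie_mem := fun {v m} hm => by
        obtain ⟨c, rfl⟩ := mem_span_singleton.mp hm
        rw [lie_smul]
        exact smul_mem _ c (hmem v) }
  have hspan (u : L) : ∃ c : F, c • x = u := by
    rcases eq_bot_or_eq_top K with hK | hK
    · have hxK : x ∈ K := mem_span_singleton_self x
      rw [hK] at hxK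
      exact absurd (by simpa using hxK) hx
    · exact mem_span_singleton.mp (show u ∈ K by simp [hK])
  refine non_abelian F (L := L) ⟨fun u v => ?_⟩
  obtain ⟨a, rfl⟩ := hspan u
  obtain ⟨b, rfl⟩ := hspan v
  simp

end LieAlgebra.IsSimple

lemma lie_mem_span_of_lie_eq_smul {F L : Type*} [Field F] [LieRing L] [LieAlgebra F L]
    {f : L →ₗ[F] L} {u x : L} {a : F} (ha : a ≠ 0) (hu : ∀ v, ⁅u, v⁆ = a • f v)
    (hfx : f x = x) (hran : LinearMap.range f ≤ span F {x}) (v : L) :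
    ⁅v, x⁆ ∈ span F {x} := by
  obtain ⟨c, hc⟩ := mem_span_singleton.mp (hran ⟨v, rfl⟩)
  have hfix : a • f ⁅v, x⁆ = a • ⁅v, x⁆ :=
    calc a • f ⁅v, x⁆ = ⁅u, ⁅v, x⁆⁆ := (hu _).symm
      _ = ⁅⁅u, v⁆, x⁆ + ⁅v, ⁅u, x⁆⁆ := leibniz_lie _ _ _
      _ = a • ⁅v, x⁆ := by simp [hu, hfx, ← hc]
  rw [← smul_right_injective L ha hfix]
  exact hran ⟨_, rfl⟩

section Extension

variable {F L : Type*} [Field F] [LieRing L] [LieAlgebra F L]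

/-- The bracket of `A = F·d ⊕ L`, an element `a·d + u` being encoded as `(a, u)`. -/
def extBracket (f : L →ₗ[F] L) (p q : F × L) : F × L :=
  (0, p.1 • f q.2 - q.1 • f p.2 + ⁅p.2, q.2⁆)

@[simp]
lemma extBracket_zero_zero (f : L →ₗ[F] L) (u v : L) :
    extBracket f (0, u) (0, v) = (0, ⁅u, v⁆) := by
  simp [extBracket]

def IsExtIdeal (f : L →ₗ[F] L) (I : Submodule F (F × L)) : Prop :=
  ∀ v ∈ I, ∀ w : F × L, extBracket f v w ∈ I

variable {f : L →ₗ[F] L} {I : Submodule F (F × L)}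

def IsExtIdeal.toLieIdeal (hI : IsExtIdeal f I) : LieIdeal F L :=
  { I.comap (LinearMap.inr F F L) with
    lie_mem := fun {y u} hu => by
      have h := I.neg_mem (hI (0, u) hu (0, y))
      rw [extBracket_zero_zero, Prod.neg_mk, neg_zero, lie_skew] at h
      exact h }

@[simp]
lemma IsExtIdeal.mem_toLieIdeal (hI : IsExtIdeal f I) {u : L} :
    u ∈ hI.toLieIdeal ↔ ((0 : F), u) ∈ I :=
  Iff.rfl

lemma IsExtIdeal.eq_bot_of_toLieIdeal_eq_bot [LieAlgebra.IsSimple F L] (hI : IsExtIdeal f I)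
    {x : L} (hx : x ≠ 0) (hfx : f x = x) (hran : LinearMap.range f ≤ span F {x})
    (hJ : hI.toLieIdeal = ⊥) : I = ⊥ := by
  have hslice (u : L) (hu : ((0 : F), u) ∈ I) : u = 0 := by
    simpa [hJ] using (hI.mem_toLieIdeal.mpr hu)
  suffices hfst : ∀ p ∈ I, p.1 = 0 by
    refine eq_bot_iff.mpr fun p hp => ?_
    have hp0 : ((0 : F), p.2) ∈ I := by rwa [← hfst p hp]
    simp [Prod.ext_iff, hfst p hp, hslice _ hp0]
  intro p hp
  by_contra ha
  have had (v : L) : ⁅p.2, v⁆ = (-p.1) • f v := by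
    have h := hslice _ (by simpa [extBracket] using hI p hp (0, v))
    rw [neg_smul, eq_neg_iff_add_eq_zero, add_comm, h]
  obtain ⟨v, hv⟩ := LieAlgebra.IsSimple.exists_lie_notMem_span_singleton (F := F) hx
  exact hv (lie_mem_span_of_lie_eq_smul (neg_ne_zero.mpr ha) had hfx hran v)

lemma IsExtIdeal.eq_prod_or_eq_top_of_toLieIdeal_eq_top (hI : IsExtIdeal f I)
    (hJ : hI.toLieIdeal = ⊤) : I = (⊥ : Submodule F F).prod ⊤ ∨ I = ⊤ := by
  refine eq_prod_bot_top_or_eq_top fun p hp => ?_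
  obtain ⟨hp1, -⟩ := mem_prod.mp hp
  have hp2 : p.2 ∈ hI.toLieIdeal := by simp [hJ]
  rw [mem_bot] at hp1
  simpa [← hp1] using hp2

theorem IsExtIdeal.eq_bot_or_eq_prod_or_eq_top [LieAlgebra.IsSimple F L] (hI : IsExtIdeal f I)
    {x : L} (hx : x ≠ 0) (hfx : f x = x) (hran : LinearMap.range f ≤ span F {x}) :
    I = ⊥ ∨ I = (⊥ : Submodule F F).prod ⊤ ∨ I = ⊤ := by
  rcases LieAlgebra.IsSimple.eq_bot_or_eq_top hI.toLieIdeal with hJ | hJ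
  · exact Or.inl (hI.eq_bot_of_toLieIdeal_eq_bot hx hfx hran hJ)
  · exact Or.inr (hI.eq_prod_or_eq_top_of_toLieIdeal_eq_top hJ)

variable [LieAlgebra.IsSimple F L]

variable (f) in
lemma prod_bot_top_le_derSeries (k : ℕ) :
    (⊥ : Submodule F F).prod ⊤ ≤
      derSeries F (F × L) (extBracket f) ((⊥ : Submodule F F).prod ⊤) k := by
  induction k with
  | zero => exact le_rfl
  | succ k ih =>
    have hinr (u : L) :
        ((0 : F), u) ∈ derSeries F (F × L) (extBracket f) ((⊥ : Submodule F F).prod ⊤) k :=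
      ih (by simp)
    calc (⊥ : Submodule F F).prod ⊤
        = (span F {z : L | ∃ u v : L, ⁅u, v⁆ = z}).map (LinearMap.inr F F L) := by
          rw [LieAlgebra.IsSimple.span_lie_eq_top, map_inr]
      _ = span F (LinearMap.inr F F L '' {z : L | ∃ u v : L, ⁅u, v⁆ = z}) := map_span _ _
      _ ≤ _ := by
        refine span_mono ?_
        rintro _ ⟨_, ⟨u, v, rfl⟩, rfl⟩
        exact ⟨_, hinr u, _, hinr v, extBracket_zero_zero f u v⟩

lemma derSeries_ne_bot_of_prod_le (hI : (⊥ : Submodule F F).prod ⊤ ≤ I) (k : ℕ) :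
    derSeries F (F × L) (extBracket f) I k ≠ ⊥ := by
  have := LieAlgebra.IsSimple.nontrivial F L
  obtain ⟨u, hu⟩ := exists_ne (0 : L)
  intro hk
  have hmem := derSeries_mono _ hI k (prod_bot_top_le_derSeries f k (by simp : ((0 : F), u) ∈ _))
  rw [hk, mem_bot] at hmem
  exact hu (congrArg Prod.snd hmem)

end Extension

/-- Let `s` be a simple Lie algebra, `x ∈ s` nonzero, and `f : s → s`
linear with `f(x) = x` and range `F·x`.  The extension `A = F·d ⊕ s` with
`[d, u] = f(u) = −[u, d]` has only the ideals `0`, `s`, `A`; in particular `s` is the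
unique proper nontrivial ideal (a simple ideal of codimension 1) and `A` is semisimple:
it has no nonzero solvable ideal. -/
theorem stmt15 (F : Type*) [Field F]
    (s : Type*) [LieRing s] [LieAlgebra F s] [LieAlgebra.IsSimple F s]
    (x : s) (hx : x ≠ 0)
    (f : s →ₗ[F] s) (hfx : f x = x) (hran : LinearMap.range f = Submodule.span F {x}) :
    letI br : (F × s) → (F × s) → (F × s) :=
      fun p q => (0, p.1 • f q.2 - q.1 • f p.2 + ⁅p.2, q.2⁆)
    (∀ I : Submodule F (F × s), (∀ v ∈ I, ∀ w : F × s, br v w ∈ I) →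
        I = ⊥ ∨ I = Submodule.prod (⊥ : Submodule F F) (⊤ : Submodule F s) ∨ I = ⊤) ∧
    (∀ I : Submodule F (F × s), (∀ v ∈ I, ∀ w : F × s, br v w ∈ I) →
        (∃ k : ℕ, derSeries F (F × s) br I k = ⊥) → I = ⊥) := by
  have classify (I : Submodule F (F × s)) (hI : IsExtIdeal f I) :=
    hI.eq_bot_or_eq_prod_or_eq_top hx hfx hran.le
  refine ⟨classify, fun I hI ⟨k, hk⟩ => ?_⟩
  rcases classify I hI with hbot | hprod | htop
  · exact hbot
  · exact absurd hk (derSeries_ne_bot_of_prod_le hprod.ge k)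
  · exact absurd hk (derSeries_ne_bot_of_prod_le (htop ▸ le_top) k)
end

section
/- Let (A,[·,·]) be a 3-dimensional simple anticommutative algebra over an arbitrary field F. Then there exists a bijective linear map σ : A → A satisfying the Hom-Jacobi identity for [·,·], such that the induced bracket [x,y]' := σ^{-1}([x,y]) satisfies the Jacobi identity and the Lie algebra (A,[·,·]') is isomorphic to the 3-dimensional cross-product Lie algebra so(3,F), i.e. there is a basis e₁, e₂, e₃ of A with [e₁,e₂] = σ(e₃), [e₂,e₃] = σ(e₁), and [e₃,e₁] = σ(e₂). In other words, every simple anticommutative algebra of dimension 3 is the outside Yau twist of so(3,F) with respect to some bijective linear map. -/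
/-!
Fix a basis `f` of `A`. By simplicity the products `b x y` span `A`; since `b` is alternating
they are spanned by the three products `b (f (k + 1)) (f (k + 2))`, so the linear map `σ` sending
`f k` to `b (f (k + 1)) (f (k + 2))` is onto, hence bijective, and the `so(3)` relations hold by
construction. Both Jacobi-type identities are cyclic sums `∑ b (φ x) (ψ (b y z))` which are
alternating and trilinear in `x, y, z`. In dimension three such a sum vanishes as soon as it
vanishes at `(f 0, f 1, f 2)`, and there every summand is `b (φ (f k)) (φ (f k)) = 0`.
-/

open Module Submodule

lemma map₂_top_top_eq_top_of_simple {R A : Type*} [CommRing R] [AddCommGroup A] [Module R A]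
    (b : A →ₗ[R] A →ₗ[R] A) (hnonab : b ≠ 0)
    (hsimple : ∀ I : Submodule R A, (∀ v ∈ I, ∀ w : A, b v w ∈ I) → I = ⊥ ∨ I = ⊤) :
    map₂ b ⊤ ⊤ = ⊤ := by
  refine (hsimple _ fun v _ w => apply_mem_map₂ b mem_top mem_top).resolve_left fun hbot => ?_
  refine hnonab (LinearMap.ext₂ fun x y => ?_)
  simpa [hbot] using apply_mem_map₂ b (mem_top (x := x)) (mem_top (x := y))

namespace LinearMap

variable {R M : Type*} [CommRing R] [AddCommGroup M] [Module R M]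

/-- For `φ = σ`, `ψ = id` this is the Hom-Jacobi expression; for `φ = id`, `ψ = σ⁻¹` its image
under `σ⁻¹` is the Jacobiator of `σ⁻¹ ∘ b`. -/
def twistedJacobiator (b : M →ₗ[R] M →ₗ[R] M) (φ ψ : M →ₗ[R] M) (x y z : M) : M :=
  b (φ x) (ψ (b y z)) + b (φ y) (ψ (b z x)) + b (φ z) (ψ (b x y))

variable {b : M →ₗ[R] M →ₗ[R] M} {φ ψ : M →ₗ[R] M}

lemma twistedJacobiator_rotate (x y z : M) :
    twistedJacobiator b φ ψ x y z = twistedJacobiator b φ ψ y z x := by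
  unfold twistedJacobiator
  abel

lemma IsAlt.twistedJacobiator_swap (hb : b.IsAlt) (x y z : M) :
    twistedJacobiator b φ ψ x z y = -twistedJacobiator b φ ψ x y z := by
  rw [twistedJacobiator, twistedJacobiator, ← hb.neg y z, ← hb.neg x y, ← hb.neg z x]
  simp only [map_neg]
  abel

lemma IsAlt.twistedJacobiator_self (hb : b.IsAlt) (x y : M) :
    twistedJacobiator b φ ψ x y y = 0 := by
  rw [twistedJacobiator, hb.self_eq_zero, ← hb.neg x y]
  simp only [map_neg, map_zero, zero_add, neg_add_cancel]

lemma twistedJacobiator_eq_zero_of_basis {ι : Type*} (f : Basis ι R M)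
    (h : ∀ i j k, twistedJacobiator b φ ψ (f i) (f j) (f k) = 0) (x y z : M) :
    twistedJacobiator b φ ψ x y z = 0 := by
  have linear_left : ∀ y z, (∀ i, twistedJacobiator b φ ψ (f i) y z = 0) →
      ∀ x, twistedJacobiator b φ ψ x y z = 0 := by
    intro y z hbasis x
    let L : M →ₗ[R] M := b.flip (ψ (b y z)) ∘ₗ φ + b (φ y) ∘ₗ ψ ∘ₗ b z + b (φ z) ∘ₗ ψ ∘ₗ b.flip y
    have hL : L = 0 := f.ext fun i => hbasis i
    exact LinearMap.congr_fun hL x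
  refine linear_left y z (fun i => ?_) x
  rw [twistedJacobiator_rotate]
  refine linear_left z (f i) (fun j => ?_) y
  rw [twistedJacobiator_rotate]
  exact linear_left (f i) (f j) (fun k => h k i j) z

lemma IsAlt.twistedJacobiator_eq_zero (hb : b.IsAlt) (f : Basis (Fin 3) R M)
    (h : ∀ k, ψ (b (f (k + 1)) (f (k + 2))) = φ (f k)) (x y z : M) :
    twistedJacobiator b φ ψ x y z = 0 := by
  have h012 : twistedJacobiator b φ ψ (f 0) (f 1) (f 2) = 0 := by
    have h0 : ψ (b (f 1) (f 2)) = φ (f 0) := h 0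
    have h1 : ψ (b (f 2) (f 0)) = φ (f 1) := h 1
    have h2 : ψ (b (f 0) (f 1)) = φ (f 2) := h 2
    rw [twistedJacobiator, h0, h1, h2]
    simp [hb.self_eq_zero]
  refine twistedJacobiator_eq_zero_of_basis f (fun i j k => ?_) x y z
  fin_cases i <;> fin_cases j <;> fin_cases k <;>
    grind [twistedJacobiator_rotate, hb.twistedJacobiator_swap, hb.twistedJacobiator_self]

lemma IsAlt.surjective_constr_cyclic (hb : b.IsAlt) (f : Basis (Fin 3) R M)
    (htop : map₂ b ⊤ ⊤ = ⊤) :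
    Function.Surjective (f.constr R fun k => b (f (k + 1)) (f (k + 2))) := by
  set T := f.constr R fun k => b (f (k + 1)) (f (k + 2))
  have hcyc : ∀ k, b (f (k + 1)) (f (k + 2)) ∈ range T := fun k => ⟨f k, f.constr_basis R _ k⟩
  have hmem : ∀ i j, b (f i) (f j) ∈ range T := by
    intro i j
    fin_cases i <;> fin_cases j
    all_goals first
      | simpa only [hb.self_eq_zero] using zero_mem (range T)
      | exact hcyc 0 | exact hcyc 1 | exact hcyc 2
      | (rw [← hb.neg]; apply neg_mem; first | exact hcyc 0 | exact hcyc 1 | exact hcyc 2)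
  rw [← range_eq_top, eq_top_iff, ← htop, ← f.span_eq, map₂_span_span, span_le]
  rintro _ ⟨_, ⟨i, rfl⟩, _, ⟨j, rfl⟩, rfl⟩
  exact hmem i j

end LinearMap

/-- Every 3-dimensional simple anticommutative algebra `(A,[·,·])` is
the outside Yau twist of `so(3,F)` by a bijective linear map: there is a bijective
linear `σ` satisfying the Hom-Jacobi identity such that the induced bracket
`[x,y]' := σ⁻¹([x,y])` satisfies the Jacobi identity, and a basis `e₁,e₂,e₃` with
`[e₁,e₂] = σ(e₃)`, `[e₂,e₃] = σ(e₁)`, `[e₃,e₁] = σ(e₂)` (so `(A,[·,·]') ≅ so(3,F)`). -/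
theorem stmt18 (F : Type*) [Field F] (A : Type*) [AddCommGroup A] [Module F A]
    (hdim : Module.finrank F A = 3)
    (b : A →ₗ[F] A →ₗ[F] A)
    (halt : ∀ x : A, b x x = 0)
    (hnonab : b ≠ 0)
    (hsimple : ∀ I : Submodule F A, (∀ v ∈ I, ∀ w : A, b v w ∈ I) → I = ⊥ ∨ I = ⊤) :
    ∃ σ : A ≃ₗ[F] A,
      (∀ x y z : A, b (σ x) (b y z) + b (σ y) (b z x) + b (σ z) (b x y) = 0) ∧
      (∀ x y z : A,
        σ.symm (b x (σ.symm (b y z))) + σ.symm (b y (σ.symm (b z x))) +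
          σ.symm (b z (σ.symm (b x y))) = 0) ∧
      (∃ e : Module.Basis (Fin 3) F A,
        b (e 0) (e 1) = σ (e 2) ∧ b (e 1) (e 2) = σ (e 0) ∧ b (e 2) (e 0) = σ (e 1)) := by
  have hb : b.IsAlt := halt
  have : FiniteDimensional F A := .of_finrank_eq_succ hdim
  let f := finBasisOfFinrankEq F A hdim
  have hT := hb.surjective_constr_cyclic f (map₂_top_top_eq_top_of_simple b hnonab hsimple)
  let σ := LinearEquiv.ofBijective _ ⟨LinearMap.injective_iff_surjective.2 hT, hT⟩
  have hσ : ∀ k, σ (f k) = b (f (k + 1)) (f (k + 2)) := f.constr_basis F _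
  refine ⟨σ, fun x y z => ?_, fun x y z => ?_, f, (hσ 2).symm, (hσ 0).symm, (hσ 1).symm⟩
  · exact hb.twistedJacobiator_eq_zero (φ := σ) (ψ := .id) f (fun k => (hσ k).symm) x y z
  · simpa [LinearMap.twistedJacobiator] using congrArg σ.symm
      (hb.twistedJacobiator_eq_zero (φ := .id) (ψ := σ.symm) f (fun k => by simp [← hσ]) x y z)
end
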